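/- arXiv:1105.4638 — 6 statements merged into one kernel-verified Lean document; each statement's English description precedes it below -/
import Mathlib

section
/- In a free group, the centralizer of every nontrivial element is an infinite cyclic subgroup. -/
/-!
The centralizer `C` of `g` is a subgroup of a free group, hence free (Nielsen–Schreier), and `g`
is a nontrivial element of its center. A free group on two or more generators has trivial center:
prepending or appending a letter different from the first letter of a reduced word gives
different reduced words. So `C` is free on at most one generator, i.e. cyclic, and it is
infinite because free groups are torsion-free.
-/

namespace FreeGroup

variable {β : Type*}

theorem center_eq_bot [Nontrivial β] : Subgroup.center (FreeGroup β) = ⊥ := by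
  classical
  refine eq_bot_iff.2 fun z hz => Subgroup.mem_bot.2 <| by_contra fun hz1 => ?_
  have hw : z.toWord ≠ [] := mt toWord_eq_nil_iff.1 hz1
  obtain ⟨x, hx⟩ := exists_ne (z.toWord.head hw).1
  -- `p` cannot cancel against the first letter of `z`, nor (by its sign) against the last one.
  set p : β × Bool := (x, (z.toWord.getLast hw).2)
  have hcons : (mk [p] * z).toWord = p :: z.toWord := by
    rw [← mk_toWord (x := z), mul_mk, toWord_mk, mk_toWord, List.singleton_append]
    refine IsReduced.reduce_eq (List.isChain_cons.2 ⟨fun q hq h => ?_, isReduced_toWord⟩)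
    rw [List.head?_eq_some_head hw, Option.mem_some_iff] at hq
    exact absurd (hq ▸ h) hx
  have hsnoc : (z * mk [p]).toWord = z.toWord ++ [p] := by
    rw [← mk_toWord (x := z), mul_mk, toWord_mk, mk_toWord]
    refine IsReduced.reduce_eq (List.isChain_append.2 ⟨isReduced_toWord, IsReduced.singleton, ?_⟩)
    intro q hq r hr _
    rw [List.getLast?_eq_some_getLast hw, Option.mem_some_iff] at hq
    rw [List.head?_cons, Option.mem_some_iff] at hr
    rw [← hq, ← hr]
  have hwords : p :: z.toWord = z.toWord ++ [p] := by
    rw [← hcons, ← hsnoc, Subgroup.mem_center_iff.1 hz]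
  have hheads := congrArg List.head? hwords
  rw [List.head?_cons, List.head?_append, List.head?_eq_some_head hw] at hheads
  exact hx (congrArg Prod.fst (Option.some_injective _ hheads))

theorem isCyclic_of_subsingleton [Subsingleton β] : IsCyclic (FreeGroup β) := by
  rw [isCyclic_iff_exists_zpowers_eq_top]
  rcases isEmpty_or_nonempty β with hβ | ⟨⟨a⟩⟩
  · refine ⟨1, eq_top_iff.2 ?_⟩
    rw [← closure_range_of, Set.range_eq_empty, Subgroup.closure_empty]
    exact bot_le
  · refine ⟨of a, ?_⟩
    rw [← closure_range_of, Subgroup.zpowers_eq_closure]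
    let := uniqueOfSubsingleton a
    rw [Set.range_unique]
    rfl

end FreeGroup

theorem IsFreeGroup.isCyclic_of_center_ne_bot {G : Type*} [Group G] [IsFreeGroup G]
    (h : Subgroup.center G ≠ ⊥) : IsCyclic G := by
  let e := IsFreeGroup.mulEquiv G
  have : Subsingleton (IsFreeGroup.Generators G) := by
    refine not_nontrivial_iff_subsingleton.1 fun _ => h ?_
    refine eq_bot_iff.2 fun z hz => Subgroup.mem_bot.2 ?_
    have := MulEquivClass.apply_mem_center e.symm hz
    rw [← Subgroup.coe_center, FreeGroup.center_eq_bot] at this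
    simpa using this
  have := FreeGroup.isCyclic_of_subsingleton (β := IsFreeGroup.Generators G)
  exact isCyclic_of_surjective e e.surjective

theorem centralizer_of_nontrivial_is_infinite_cyclic {α : Type*}
    (g : FreeGroup α) (hg : g ≠ 1) :
    ∃ r : FreeGroup α, (∀ n : ℤ, r ^ n = 1 → n = 0) ∧
      ∀ s : FreeGroup α, (s * g * s⁻¹ = g ↔ ∃ i : ℤ, s = r ^ i) := by
  set C := Subgroup.centralizer {g} with hC
  have hgC : g ∈ C := Subgroup.mem_centralizer_singleton_iff.2 rfl
  have hcenter : (⟨g, hgC⟩ : C) ∈ Subgroup.center C := Subgroup.mem_center_iff.2 fun s =>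
    Subtype.ext (Subgroup.mem_centralizer_singleton_iff.1 s.2)
  have hcyc : IsCyclic C := IsFreeGroup.isCyclic_of_center_ne_bot <|
    Subgroup.ne_bot_iff_exists_ne_one.2 ⟨⟨_, hcenter⟩, fun h => hg (congrArg Subtype.val
      (congrArg Subtype.val h))⟩
  obtain ⟨r, hr⟩ := (Subgroup.isCyclic_iff_exists_zpowers_eq_top C).1 hcyc
  have hr1 : r ≠ 1 := by
    rintro rfl
    rw [Subgroup.zpowers_one_eq_bot] at hr
    exact hg (Subgroup.mem_bot.1 (hr ▸ hgC))
  refine ⟨r, fun n => (IsMulTorsionFree.zpow_eq_one_iff_right hr1).1, fun s => ?_⟩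
  rw [mul_inv_eq_iff_eq_mul, ← Subgroup.mem_centralizer_singleton_iff, ← hC, ← hr,
    Subgroup.mem_zpowers_iff]
  simp only [eq_comm]
end

section
/- Every nontrivial element of a free group is contained in a unique maximal infinite cyclic subgroup; equivalently, for every g ≠ 1 in a free group there is an element h and an integer n ≥ 1 with g = h^n such that any element whose some nonzero power equals a power of g lies in the cyclic group generated by h. -/
/-!
The centralizer of `g ≠ 1` is a free group (Nielsen–Schreier) with the nontrivial central
element `g`. A free group with two distinct basis elements `a ≠ b` has trivial center: a central
`z` generates with `a` a commutative, hence cyclic, free subgroup in which `a` is primitive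
(compare exponent sums in `a`), so `z ∈ ⟨a⟩`; likewise `z ∈ ⟨b⟩`, and the exponent sum in `b`
forces `z = 1`. Hence the centralizer of `g` is cyclic, say `⟨h⟩`. If `x ^ m = g ^ k` with
`m ≠ 0`, then either `g ^ k = 1` and `x = 1` by torsion-freeness, or `x` and `g` both lie in the
cyclic, hence commutative, centralizer of `g ^ k`; either way `x` centralizes `g`, so `x ∈ ⟨h⟩`.
-/

open Subgroup

theorem Subgroup.exists_pow_eq_and_zpowers_eq {G : Type*} [Group G] {g c : G} (hg : g ≠ 1)
    (hgc : g ∈ zpowers c) : ∃ (h : G) (n : ℕ), 1 ≤ n ∧ g = h ^ n ∧ zpowers h = zpowers c := by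
  obtain ⟨j, rfl⟩ := mem_zpowers_iff.mp hgc
  obtain ⟨n, rfl | rfl⟩ := Int.eq_nat_or_neg j
  · refine ⟨c, n, Nat.one_le_iff_ne_zero.mpr ?_, zpow_natCast c n, rfl⟩
    rintro rfl
    exact hg (zpow_zero c)
  · refine ⟨c⁻¹, n, Nat.one_le_iff_ne_zero.mpr ?_, ?_, zpowers_inv⟩
    · rintro rfl
      exact hg (by simp)
    · rw [zpow_neg, zpow_natCast, inv_pow]

theorem FreeGroup.isCyclic_of_subsingleton_s2 {α : Type*} [Subsingleton α] :
    IsCyclic (FreeGroup α) := by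
  rcases isEmpty_or_nonempty α with _ | ⟨⟨a⟩⟩
  · infer_instance
  · have := uniqueOfSubsingleton a
    infer_instance

namespace IsFreeGroup

variable {G : Type*} [Group G] [IsFreeGroup G]

theorem isCyclic_of_subsingleton_generators [Subsingleton (Generators G)] : IsCyclic G :=
  (toFreeGroup G).isCyclic.mpr FreeGroup.isCyclic_of_subsingleton_s2

theorem subsingleton_generators_of_isMulCommutative [IsMulCommutative G] :
    Subsingleton (Generators G) := by
  classical
  refine ⟨fun a b => by_contra fun hab => ?_⟩
  obtain ⟨s, t, hst⟩ : ∃ s t : Equiv.Perm (Fin 3), s * t ≠ t * s := by decide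
  let f : G →* Equiv.Perm (Fin 3) := lift fun i => if i = a then s else t
  have := congrArg f (isMulCommutative_iff.mp ‹_› (of a) (of b))
  simp only [f, map_mul, lift_of, if_neg (Ne.symm hab)] at this
  exact hst this

theorem isCyclic_of_isMulCommutative [IsMulCommutative G] : IsCyclic G :=
  have := subsingleton_generators_of_isMulCommutative (G := G)
  isCyclic_of_subsingleton_generators

theorem exists_mem_zpowers_of_commute {x y : G} (h : Commute x y) :
    ∃ c : G, x ∈ zpowers c ∧ y ∈ zpowers c := by
  have : IsMulCommutative (closure {x, y}) := isMulCommutative_closure <| by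
    rintro u (rfl | rfl) v (rfl | rfl) <;> first | rfl | exact h.eq | exact h.eq.symm
  obtain ⟨c, hc⟩ := (closure {x, y}).isCyclic_iff_exists_zpowers_eq_top.mp
    isCyclic_of_isMulCommutative
  exact ⟨c, hc ▸ subset_closure (by simp), hc ▸ subset_closure (by simp)⟩

open Classical in
noncomputable def exponentSum (a : Generators G) : G →* Multiplicative ℤ :=
  lift (Pi.mulSingle a (Multiplicative.ofAdd 1))

@[simp]
theorem exponentSum_of_self (a : Generators G) :
    exponentSum a (of a) = Multiplicative.ofAdd 1 := by
  simp [exponentSum]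

@[simp]
theorem exponentSum_of_of_ne {a b : Generators G} (h : b ≠ a) : exponentSum a (of b) = 1 := by
  simp [exponentSum, h]

theorem zpowers_eq_zpowers_of_of_mem {a : Generators G} {c : G} (h : of a ∈ zpowers c) :
    zpowers c = zpowers (of a) := by
  obtain ⟨j, hj⟩ := mem_zpowers_iff.mp h
  have hj1 : j * Multiplicative.toAdd (exponentSum a c) = 1 := by
    simpa using congrArg (fun x => Multiplicative.toAdd (exponentSum a x)) hj
  rcases Int.eq_one_or_neg_one_of_mul_eq_one hj1 with rfl | rfl
  · rw [← hj, zpow_one]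
  · rw [← hj, zpow_neg_one, zpowers_inv]

theorem mem_zpowers_of_of_commute {a : Generators G} {z : G} (h : Commute z (of a)) :
    z ∈ zpowers (of a) := by
  obtain ⟨c, hz, ha⟩ := exists_mem_zpowers_of_commute h
  exact zpowers_eq_zpowers_of_of_mem ha ▸ hz

theorem eq_one_of_commute_of_of_ne {a b : Generators G} (hab : a ≠ b) {z : G}
    (ha : Commute z (of a)) (hb : Commute z (of b)) : z = 1 := by
  obtain ⟨p, rfl⟩ := mem_zpowers_iff.mp (mem_zpowers_of_of_commute ha)
  obtain ⟨q, hq⟩ := mem_zpowers_iff.mp (mem_zpowers_of_of_commute hb)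
  have hq0 : q = 0 := by
    simpa [exponentSum_of_of_ne hab] using
      congrArg (fun x => Multiplicative.toAdd (exponentSum b x)) hq
  rw [← hq, hq0, zpow_zero]

theorem isCyclic_of_mem_center {z : G} (hz : z ∈ center G) (hz1 : z ≠ 1) : IsCyclic G := by
  have : Subsingleton (Generators G) := ⟨fun a b => by_contra fun hab =>
    hz1 (eq_one_of_commute_of_of_ne hab (mem_center_iff.mp hz _).symm
      (mem_center_iff.mp hz _).symm)⟩
  exact isCyclic_of_subsingleton_generators

theorem isCyclic_centralizer {w : G} (hw : w ≠ 1) : IsCyclic (centralizer {w}) := by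
  refine isCyclic_of_mem_center (z := ⟨w, mem_centralizer_singleton_iff.mpr rfl⟩) ?_ ?_
  · exact mem_center_iff.mpr fun u => Subtype.ext (mem_centralizer_singleton_iff.mp u.2)
  · simpa [← Subtype.coe_inj] using hw

theorem commute_of_zpow_eq_zpow [IsMulTorsionFree G] {x y : G} {m k : ℤ} (hm : m ≠ 0)
    (h : x ^ m = y ^ k) : Commute x y := by
  by_cases hw : y ^ k = 1
  · rw [hw, IsMulTorsionFree.zpow_eq_one_iff_left hm] at h
    exact h ▸ Commute.one_left y
  · have := isCyclic_centralizer hw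
    refine setLike_mul_comm (s := centralizer {y ^ k}) ?_ ?_
    · exact mem_centralizer_singleton_iff.mpr (h ▸ (Commute.self_zpow x m).eq)
    · exact mem_centralizer_singleton_iff.mpr (Commute.self_zpow y k).eq

end IsFreeGroup

theorem unique_maximal_infinite_cyclic {α : Type*}
    (g : FreeGroup α) (hg : g ≠ 1) :
    ∃ (h : FreeGroup α) (n : ℕ), 1 ≤ n ∧ g = h ^ n ∧
      ∀ x : FreeGroup α,
        (∃ m : ℤ, m ≠ 0 ∧ ∃ k : ℤ, x ^ m = g ^ k) →
        ∃ i : ℤ, x = h ^ i := by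
  obtain ⟨c, hc⟩ := (centralizer {g}).isCyclic_iff_exists_zpowers_eq_top.mp
    (IsFreeGroup.isCyclic_centralizer hg)
  have hgc : g ∈ zpowers c := hc ▸ mem_centralizer_singleton_iff.mpr rfl
  obtain ⟨h, n, hn, hgh, hhc⟩ := exists_pow_eq_and_zpowers_eq hg hgc
  refine ⟨h, n, hn, hgh, fun x ⟨m, hm, k, hx⟩ => ?_⟩
  have hxh : x ∈ zpowers h := hhc ▸ hc ▸ mem_centralizer_singleton_iff.mpr
    (IsFreeGroup.commute_of_zpow_eq_zpow hm hx).eq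
  obtain ⟨i, hi⟩ := mem_zpowers_iff.mp hxh
  exact ⟨i, hi.symm⟩
end

section
/- In a free group, if an element g commutes with h^n for some nonzero integer n and h ≠ 1, then g commutes with h. -/
/-!
The centralizer of a nontrivial element `z` of a free group is free (Nielsen–Schreier), and `z`
is central in it. A free group with a nontrivial central element `z` has at most one generator:
for each generator `a`, the subgroup generated by `z` and `a` is free and abelian, hence cyclic,
so some nonzero power of `z` is a nonzero power of `a`; the exponent sum of `a` then rules out a
second generator. Hence the centralizer of `h ^ n ≠ 1` is cyclic, and it contains `g` and `h`.
-/

open Subgroup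

theorem IsCyclic.exists_zpow_eq_zpow {G : Type*} [Group G] [IsCyclic G] {x y : G}
    (hx : x ≠ 1) (hy : y ≠ 1) : ∃ i j : ℤ, i ≠ 0 ∧ j ≠ 0 ∧ x ^ i = y ^ j := by
  obtain ⟨g, hg⟩ := IsCyclic.exists_generator (α := G)
  obtain ⟨k, rfl⟩ := mem_zpowers_iff.mp (hg x)
  obtain ⟨l, rfl⟩ := mem_zpowers_iff.mp (hg y)
  refine ⟨l, k, ?_, ?_, ?_⟩
  · rintro rfl
    exact hy (zpow_zero g)
  · rintro rfl
    exact hx (zpow_zero g)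
  · rw [← zpow_mul, ← zpow_mul, mul_comm]

namespace IsFreeGroup

variable {G : Type*} [Group G] [IsFreeGroup G]

theorem of_ne_one (a : Generators G) : of a ≠ 1 := fun h =>
  FreeGroup.of_ne_one a ((mulEquiv G).injective (h.trans (map_one _).symm))

theorem closure_range_of : closure (Set.range (of : Generators G → G)) = ⊤ := by
  have : Set.range (of : Generators G → G) =
      ((mulEquiv G : FreeGroup (Generators G) →* G)) '' Set.range FreeGroup.of := by
    rw [← Set.range_comp]
    rfl
  rw [this, ← MonoidHom.map_closure, FreeGroup.closure_range_of]
  exact map_top_of_surjective _ (mulEquiv G).surjective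

theorem eq_of_commute_of {a b : Generators G} (h : Commute (of a) (of b)) : a = b := by
  classical
  by_contra hab
  let f : G →* Equiv.Perm (Fin 3) :=
    lift (Function.update (fun _ => Equiv.swap 1 2) a (Equiv.swap 0 1))
  have := congrArg f h.eq
  simp only [f, map_mul, lift_of, Function.update_self, Function.update_of_ne (Ne.symm hab)]
    at this
  exact absurd this (by decide)

theorem exists_zpow_eq_zpow_of_of_mem_center {z : G} (hz : z ∈ center G) (hz1 : z ≠ 1)
    (a : Generators G) : ∃ i j : ℤ, i ≠ 0 ∧ j ≠ 0 ∧ z ^ i = of a ^ j := by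
  let H := closure {z, of a}
  have : IsMulCommutative H := isMulCommutative_closure <| by
    rintro x (rfl | rfl) y (rfl | rfl) <;>
      first | rfl | exact mem_center_iff.mp hz _ | exact (mem_center_iff.mp hz _).symm
  have : IsCyclic H := isCyclic_of_isMulCommutative
  obtain ⟨i, j, hi, hj, h⟩ := IsCyclic.exists_zpow_eq_zpow
    (x := (⟨z, subset_closure (by simp)⟩ : H)) (y := ⟨of a, subset_closure (by simp)⟩)
    (by simpa [Subtype.ext_iff] using hz1) (by simpa [Subtype.ext_iff] using of_ne_one a)
  exact ⟨i, j, hi, hj, congrArg Subtype.val h⟩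

theorem subsingleton_generators_of_mem_center {z : G} (hz : z ∈ center G) (hz1 : z ≠ 1) :
    Subsingleton (Generators G) := by
  classical
  refine ⟨fun a b => by_contra fun hab => ?_⟩
  obtain ⟨_, j, _, hj, hza⟩ := exists_zpow_eq_zpow_of_of_mem_center hz hz1 a
  obtain ⟨k, _, hk, _, hzb⟩ := exists_zpow_eq_zpow_of_of_mem_center hz hz1 b
  let expSum : G →* Multiplicative ℤ := lift (Pi.mulSingle a (.ofAdd 1))
  have hz0 : expSum z = 1 := by
    have := congrArg expSum hzb
    simp only [expSum, map_zpow, lift_of, Pi.mulSingle_eq_of_ne (Ne.symm hab), one_zpow] at this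
    exact (IsMulTorsionFree.zpow_eq_one_iff_left hk).mp this
  have := congrArg expSum hza
  simp only [expSum, map_zpow, hz0, lift_of, Pi.mulSingle_eq_same, ← ofAdd_zsmul,
    Int.zsmul_eq_mul, one_zpow, mul_one] at this
  exact hj (ofAdd_eq_one.mp this.symm)

theorem isCyclic_centralizer_s4 {z : G} (hz : z ≠ 1) : IsCyclic (centralizer {z}) :=
  isCyclic_of_mem_center (z := ⟨z, mem_centralizer_singleton_iff.mpr rfl⟩)
    (mem_center_iff.mpr fun x => Subtype.ext (mem_centralizer_singleton_iff.mp x.2))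
    (by simpa [Subtype.ext_iff] using hz)

end IsFreeGroup

theorem commute_of_commute_pow {α : Type*}
    (g h : FreeGroup α) (hh : h ≠ 1) (n : ℤ) (hn : n ≠ 0)
    (hc : g * h ^ n = h ^ n * g) :
    g * h = h * g := by
  have hhn : h ^ n ≠ 1 := (IsMulTorsionFree.zpow_eq_one_iff_left hn).not.mpr hh
  have := IsFreeGroup.isCyclic_centralizer_s4 hhn
  have hg : g ∈ centralizer {h ^ n} := mem_centralizer_singleton_iff.mpr hc
  have hh' : h ∈ centralizer {h ^ n} :=
    mem_centralizer_singleton_iff.mpr ((Commute.refl h).zpow_right n).eq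
  exact congrArg Subtype.val (mul_comm' (⟨g, hg⟩ : centralizer {h ^ n}) ⟨h, hh'⟩)
end

section
/- In a free group, if two powers of the same nontrivial element are conjugate, then the exponents are equal: if x ≠ 1 and u * x^p * u⁻¹ = x^q for integers p, q, then p = q. -/
/-!
The cyclic length of `x` (the length of its cyclically reduced core, i.e. its translation length
on the Cayley tree) is the slope of `n ↦ norm (x ^ n)`. Slopes do not see the bounded error introduced
by conjugation, so the cyclic length is a conjugacy invariant, and it scales by `|k|` under
`x ↦ x ^ k`. Hence `|p| = |q|`. If `q = -p`, then `y = x ^ p` satisfies `u * y * u⁻¹ = y⁻¹`,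
so `(y * u) ^ 2 = u ^ 2`, and uniqueness of roots in the torsion-free group gives `y = 1`.
-/

theorem eq_one_of_conj_eq_inv {G : Type*} [Group G] [IsMulTorsionFree G] {u y : G}
    (h : u * y * u⁻¹ = y⁻¹) : y = 1 := by
  have hsq : (y * u) ^ 2 = u ^ 2 := by
    calc (y * u) ^ 2 = y * (u * y * u⁻¹) * (u * u) := by rw [sq]; group
      _ = u ^ 2 := by rw [h, mul_inv_cancel, one_mul, sq]
  simpa using pow_left_injective two_ne_zero hsq

theorem Nat.le_of_forall_add_mul_succ_le {a b s t : ℕ}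
    (h : ∀ n, a + (n + 1) * s ≤ b + (n + 1) * t) : s ≤ t := by
  by_contra! hts
  have := h b
  nlinarith

namespace FreeGroup

variable {α : Type*} [DecidableEq α]

def cyclicLength (x : FreeGroup α) : ℕ := (reduceCyclically x.toWord).length

theorem norm_pow_eq {x : FreeGroup α} {n : ℕ} (hn : n ≠ 0) :
    (x ^ n).norm = 2 * (reduceCyclically.conjugator x.toWord).length + n * x.cyclicLength := by
  rw [norm, toWord_pow, reduceCyclically.reduce_flatten_replicate isReduced_toWord, if_neg hn]
  simp only [List.length_append, List.length_flatten, List.map_replicate, List.sum_replicate,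
    invRev_length, cyclicLength, smul_eq_mul]
  ring

theorem cyclicLength_pos {x : FreeGroup α} (hx : x ≠ 1) : 0 < x.cyclicLength := by
  by_contra! h0
  have hnil : reduceCyclically x.toWord = [] := List.length_eq_zero_iff.mp (Nat.le_zero.mp h0)
  apply hx
  have := reduceCyclically.conj_conjugator_reduceCyclically x.toWord
  rw [hnil, List.append_nil] at this
  rw [← mk_toWord (x := x), ← this, ← mul_mk, ← inv_mk, mul_inv_cancel]

theorem cyclicLength_le_of_norm_pow_le {x : FreeGroup α} {a s : ℕ}
    (h : ∀ n, (x ^ (n + 1)).norm ≤ a + (n + 1) * s) : x.cyclicLength ≤ s :=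
  Nat.le_of_forall_add_mul_succ_le fun n => (norm_pow_eq n.add_one_ne_zero).symm.trans_le (h n)

theorem cyclicLength_eq_of_norm_pow_eq {x : FreeGroup α} {a s : ℕ}
    (h : ∀ n, (x ^ (n + 1)).norm = a + (n + 1) * s) : x.cyclicLength = s :=
  le_antisymm (cyclicLength_le_of_norm_pow_le fun n => (h n).le)
    (Nat.le_of_forall_add_mul_succ_le fun n => (h n).symm.trans_le (norm_pow_eq n.add_one_ne_zero).le)

theorem cyclicLength_conj_le (u x : FreeGroup α) :
    (u * x * u⁻¹).cyclicLength ≤ x.cyclicLength := by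
  refine cyclicLength_le_of_norm_pow_le (a := 2 * (reduceCyclically.conjugator x.toWord).length
    + 2 * u.norm) fun n => ?_
  rw [conj_pow]
  have h1 := norm_mul_le (u * x ^ (n + 1)) u⁻¹
  have h2 := norm_mul_le u (x ^ (n + 1))
  rw [norm_inv_eq, norm_pow_eq n.add_one_ne_zero] at *
  omega

theorem cyclicLength_conj (u x : FreeGroup α) :
    (u * x * u⁻¹).cyclicLength = x.cyclicLength := by
  refine le_antisymm (cyclicLength_conj_le u x) ?_
  simpa [mul_assoc] using cyclicLength_conj_le u⁻¹ (u * x * u⁻¹)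

theorem norm_zpow (x : FreeGroup α) (m : ℤ) : (x ^ m).norm = (x ^ m.natAbs).norm := by
  obtain ⟨k, rfl | rfl⟩ := Int.eq_nat_or_neg m <;> simp

theorem cyclicLength_zpow (x : FreeGroup α) (k : ℤ) :
    (x ^ k).cyclicLength = k.natAbs * x.cyclicLength := by
  rcases eq_or_ne k 0 with rfl | hk
  · simp [cyclicLength]
  refine cyclicLength_eq_of_norm_pow_eq (a := 2 * (reduceCyclically.conjugator x.toWord).length)
    fun n => ?_
  rw [← zpow_natCast, ← zpow_mul, norm_zpow, Int.natAbs_mul, Int.natAbs_natCast,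
    norm_pow_eq (mul_ne_zero (Int.natAbs_ne_zero.mpr hk) n.add_one_ne_zero)]
  ring

end FreeGroup

theorem conjugate_powers_eq_exponents {α : Type*}
    (x u : FreeGroup α) (hx : x ≠ 1) (p q : ℤ)
    (h : u * x ^ p * u⁻¹ = x ^ q) :
    p = q := by
  classical
  have habs : p.natAbs = q.natAbs := by
    have := congrArg FreeGroup.cyclicLength h
    rw [FreeGroup.cyclicLength_conj, FreeGroup.cyclicLength_zpow,
      FreeGroup.cyclicLength_zpow] at this
    exact Nat.eq_of_mul_eq_mul_right (FreeGroup.cyclicLength_pos hx) this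
  rcases Int.natAbs_eq_natAbs_iff.mp habs with rfl | rfl
  · rfl
  · rw [zpow_neg] at h
    have hq : x ^ q = 1 := inv_eq_one.mp (eq_one_of_conj_eq_inv (u := u) (by rwa [inv_inv]))
    rw [(IsMulTorsionFree.zpow_eq_one_iff_right hx).mp hq, neg_zero]
end

section
/- In a free group, if (d*c)^n * d = (c*d)^m * c for some integers n and m, then c and d commute. -/
/-!
Put `u = d * c` and `w = (d * c) ^ n * d`. Since `d * (c * d) ^ m = u ^ m * d`, the hypothesis gives
`w * w = u ^ (n + m + 1)`, so `u` commutes with `w ^ 2`. Free groups have unique roots, so `u`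
commutes with `w`, hence with `d = u ^ (-n) * w`; and `(d * c) * d = d * (d * c)` cancels to
`c * d = d * c`.
-/

section TorsionFree

variable {G : Type*} [Group G] [IsMulTorsionFree G]

theorem Commute.of_pow_right {x y : G} {k : ℕ} (hk : k ≠ 0) (h : Commute x (y ^ k)) :
    Commute x y := by
  have hconj : (x * y * x⁻¹) ^ k = y ^ k := by
    rw [conj_pow, h.eq, mul_inv_cancel_right]
  have hfix : x * y * x⁻¹ = y := pow_left_injective hk hconj
  exact mul_inv_eq_iff_eq_mul.mp hfix

end TorsionFree

section Group

variable {G : Type*} [Group G]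

theorem mul_self_eq_zpow_of_zpow_mul_eq_zpow_mul {c d : G} {n m : ℤ}
    (h : (d * c) ^ n * d = (c * d) ^ m * c) :
    ((d * c) ^ n * d) * ((d * c) ^ n * d) = (d * c) ^ (n + m + 1) := by
  have hshift : d * (c * d) ^ m = (d * c) ^ m * d :=
    (SemiconjBy.zpow_right (mul_assoc d c d).symm m).eq
  calc ((d * c) ^ n * d) * ((d * c) ^ n * d)
      = (d * c) ^ n * d * ((c * d) ^ m * c) := congrArg (_ * ·) h
    _ = (d * c) ^ n * (d * (c * d) ^ m) * c := by group
    _ = (d * c) ^ n * (d * c) ^ m * (d * c) := by rw [hshift]; group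
    _ = (d * c) ^ (n + m + 1) := by rw [← zpow_add, zpow_add_one]

theorem commute_of_commute_mul_left {c d : G} (h : Commute (d * c) d) : Commute c d :=
  mul_left_cancel (a := d) (by simpa only [mul_assoc] using h.eq)

end Group

theorem commute_of_zpow_mul_eq_zpow_mul {G : Type*} [Group G] [IsMulTorsionFree G] {c d : G}
    {n m : ℤ} (h : (d * c) ^ n * d = (c * d) ^ m * c) : Commute c d := by
  set u := d * c
  have hsq : Commute u ((u ^ n * d) ^ 2) := by
    rw [sq, mul_self_eq_zpow_of_zpow_mul_eq_zpow_mul h]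
    exact Commute.self_zpow u _
  have hw : Commute u (u ^ n * d) := hsq.of_pow_right two_ne_zero
  have hd : Commute u d := by
    simpa only [inv_mul_cancel_left, zpow_neg] using ((Commute.refl u).zpow_right (-n)).mul_right hw
  exact commute_of_commute_mul_left hd

theorem commute_of_power_identity {α : Type*}
    (c d : FreeGroup α) (n m : ℤ)
    (h : (d * c) ^ n * d = (c * d) ^ m * c) :
    c * d = d * c :=
  (commute_of_zpow_mul_eq_zpow_mul h).eq
end

section
/- In a free group, if u and v are nontrivial elements such that u * v = v * u, then there exists an element w and integers m, n with u = w^m and v = w^n. -/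
/-!
Two commuting elements generate an abelian subgroup, which is free by Nielsen–Schreier. A free
group whose basis has two distinct elements `a ≠ b` is not abelian (`of a` and `of b` map to
non-commuting transpositions in `S₃`), so this subgroup has rank at most one and is cyclic.
-/

namespace FreeGroup

theorem eq_of_commute_of {ι : Type*} {a b : ι} (h : Commute (of a) (of b)) : a = b := by
  classical
  by_contra hab
  let f : ι → Equiv.Perm (Fin 3) := fun i => if i = a then Equiv.swap 0 1 else Equiv.swap 1 2
  have hf := congrArg (lift f) h.eq
  have ha : f a = Equiv.swap 0 1 := if_pos rfl
  have hb : f b = Equiv.swap 1 2 := if_neg (Ne.symm hab)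
  simp only [_root_.map_mul, lift_apply_of, ha, hb] at hf
  exact absurd hf (by decide)

instance isCyclic_of_isMulCommutative {ι : Type*} [IsMulCommutative (FreeGroup ι)] :
    IsCyclic (FreeGroup ι) := by
  have : Subsingleton ι := ⟨fun a b => eq_of_commute_of (mul_comm' _ _)⟩
  cases isEmpty_or_nonempty ι
  · infer_instance
  · have : Unique ι := uniqueOfSubsingleton (Classical.arbitrary ι)
    infer_instance

end FreeGroup

namespace IsFreeGroup

variable {G : Type*} [Group G] [IsFreeGroup G]

instance isCyclic_of_isMulCommutative_s19 [IsMulCommutative G] : IsCyclic G := by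
  let e := toFreeGroup G
  have : IsMulCommutative (FreeGroup (Generators G)) := .of_comm fun x y =>
    e.symm.injective <| by simp only [map_mul, mul_comm']
  exact isCyclic_of_surjective e.symm e.symm.surjective

theorem exists_mem_zpowers_of_commute_s19 {u v : G} (h : Commute u v) :
    ∃ w : G, u ∈ Subgroup.zpowers w ∧ v ∈ Subgroup.zpowers w := by
  have hcomm : ∀ x ∈ ({u, v} : Set G), ∀ y ∈ ({u, v} : Set G), x * y = y * x := by
    rintro x (rfl | rfl) y (rfl | rfl) <;> first | rfl | exact h | exact h.symm
  have := Subgroup.isMulCommutative_closure hcomm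
  obtain ⟨w, hw⟩ := IsCyclic.exists_generator (α := Subgroup.closure {u, v})
  have hmem : ∀ x ∈ ({u, v} : Set G), x ∈ Subgroup.zpowers (w : G) := fun x hx => by
    obtain ⟨k, hk⟩ := hw ⟨x, Subgroup.subset_closure hx⟩
    exact ⟨k, congrArg Subtype.val hk⟩
  exact ⟨w, hmem u (by simp), hmem v (by simp)⟩

end IsFreeGroup

theorem commuting_elements_common_root_general {α : Type*}
    (u v : FreeGroup α)
    (h : u * v = v * u) :
    ∃ (w : FreeGroup α) (m n : ℤ), u = w ^ m ∧ v = w ^ n := by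
  obtain ⟨w, ⟨m, rfl⟩, ⟨n, rfl⟩⟩ := IsFreeGroup.exists_mem_zpowers_of_commute_s19 h
  exact ⟨w, m, n, rfl, rfl⟩

theorem commuting_elements_common_root {α : Type*}
    (u v : FreeGroup α) (hu : u ≠ 1) (hv : v ≠ 1)
    (h : u * v = v * u) :
    ∃ (w : FreeGroup α) (m n : ℤ), u = w ^ m ∧ v = w ^ n :=
  commuting_elements_common_root_general u v h
end
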